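/- For a non-negative integer β ≥ 1, the partial fraction decomposition 1/((z;q)_β) = Σ_{b=0}^{β-1} 1/((1-q^b z) · (q^{-b};q)_b · (q;q)_{β-b-1}) holds as an identity of rational functions in z over ℚ(q). -/

import Mathlib

open Finset

noncomputable section

/-- The field `ℚ(q,z)`: rational functions in `z` over `ℚ(q)`. -/
abbrev L : Type := RatFunc (RatFunc ℚ)

/-- The indeterminate `q`. -/
noncomputable def q : L := RatFunc.C RatFunc.X

/-- The indeterminate `z`. -/
noncomputable def z : L := RatFunc.X

/-- The q-Pochhammer symbol `(x;q)_n = ∏_{i=0}^{n-1} (1 - q^i x)`. -/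
noncomputable def poch (x : L) (n : ℕ) : L := ∏ i ∈ Finset.range n, (1 - q ^ i * x)

/-!
With the nodes `v i = q⁻ⁱ`, the identity is the partial fraction expansion
`1 / ∏ (x - v i) = ∑ w_b / (x - v b)`, `w_b = ∏_{i ≠ b} (v b - v i)⁻¹`, which is Lagrange
interpolation of the constant `1` evaluated at `x = z`. Rescaling every factor `x - v i` to
`1 - qⁱ x` turns `1 / w_b` into `∏_{i ≠ b} (1 - q^{i-b})`, whose factors with `i < b` form
`(q^{-b};q)_b` and those with `i > b` form `(q;q)_{β-b-1}`.
-/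

theorem Lagrange.inv_prod_sub_eq_sum_nodalWeight {F ι : Type*} [Field F] [DecidableEq ι]
    {s : Finset ι} {v : ι → F} {x : F} (hvs : Set.InjOn v s) (hs : s.Nonempty)
    (hx : ∀ i ∈ s, x ≠ v i) :
    (∏ i ∈ s, (x - v i))⁻¹ = ∑ i ∈ s, nodalWeight s v i * (x - v i)⁻¹ := by
  have h := eval_interpolate_not_at_node (1 : ι → F) hx
  simp only [interpolate_one hvs hs, Polynomial.eval_one, eval_nodal, Pi.one_apply,
    mul_one] at h
  exact inv_eq_of_mul_eq_one_right h.symm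

theorem inv_prod_one_sub_mul_eq_sum {F ι : Type*} [Field F] [DecidableEq ι]
    {s : Finset ι} {a : ι → F} {x : F} (ha : ∀ i ∈ s, a i ≠ 0) (has : Set.InjOn a s)
    (hs : s.Nonempty) (hx : ∀ i ∈ s, 1 - a i * x ≠ 0) :
    (∏ i ∈ s, (1 - a i * x))⁻¹ =
      ∑ b ∈ s, ((1 - a b * x) * ∏ i ∈ s.erase b, (1 - a i * (a b)⁻¹))⁻¹ := by
  have hvs : Set.InjOn (fun i => (a i)⁻¹) s := fun i hi j hj h => has hi hj (inv_inj.mp h)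
  have hxv : ∀ i ∈ s, x ≠ (a i)⁻¹ := fun i hi h => hx i hi (by
    rw [h, mul_inv_cancel₀ (ha i hi), sub_self])
  have hrescale : ∀ i ∈ s, ∀ y : F, 1 - a i * y = -a i * (y - (a i)⁻¹) := fun i hi y => by
    field_simp [ha i hi]; ring
  have hterm : ∀ b ∈ s, (1 - a b * x) * ∏ i ∈ s.erase b, (1 - a i * (a b)⁻¹) =
      (∏ i ∈ s, -a i) * ((x - (a b)⁻¹) * ∏ i ∈ s.erase b, ((a b)⁻¹ - (a i)⁻¹)) := by
    intro b hb
    rw [← mul_prod_erase s (fun i => -a i) hb, hrescale b hb,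
      prod_congr rfl fun i hi => hrescale i (mem_of_mem_erase hi) _, prod_mul_distrib]
    ring
  rw [prod_congr rfl fun i hi => hrescale i hi x, prod_mul_distrib, mul_inv,
    Lagrange.inv_prod_sub_eq_sum_nodalWeight hvs hs hxv, mul_sum]
  refine sum_congr rfl fun b hb => ?_
  rw [hterm b hb, Lagrange.nodalWeight, prod_inv_distrib, mul_inv, mul_inv]
  ring

theorem q_ne_zero : q ≠ 0 :=
  (map_ne_zero RatFunc.C).mpr RatFunc.X_ne_zero

theorem q_pow_injective : Function.Injective (q ^ · : ℕ → L) := by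
  intro i j h
  have h' : RatFunc.intDegree ((RatFunc.X : RatFunc ℚ) ^ i) =
      RatFunc.intDegree ((RatFunc.X : RatFunc ℚ) ^ j) := by
    simp only [q, ← map_pow] at h
    rw [RatFunc.C_injective h]
  simpa only [← RatFunc.algebraMap_X, ← map_pow, RatFunc.intDegree_polynomial,
    Polynomial.natDegree_X_pow, Nat.cast_inj] using h'

theorem one_sub_q_pow_mul_z_ne_zero (i : ℕ) : 1 - q ^ i * z ≠ 0 := by
  intro h
  have hz : z = RatFunc.C ((RatFunc.X : RatFunc ℚ) ^ i)⁻¹ := by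
    rw [map_inv₀, map_pow, ← q, eq_inv_of_mul_eq_one_right (sub_eq_zero.mp h).symm]
  exact RatFunc.transcendental_X (hz ▸ isAlgebraic_algebraMap _)

theorem prod_range_erase_one_sub_q_pow_mul_inv {β b : ℕ} (hb : b < β) :
    ∏ i ∈ (range β).erase b, (1 - q ^ i * (q ^ b)⁻¹) =
      poch (q ^ b)⁻¹ b * poch q (β - b - 1) := by
  have hsplit : range β = insert b (range b ∪ Ico (b + 1) β) := by
    ext i
    simp only [mem_insert, mem_union, mem_range, mem_Ico]
    omega
  have hdisj : Disjoint (range b) (Ico (b + 1) β) := disjoint_left.mpr fun i hi hi' => by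
    simp only [mem_range, mem_Ico] at hi hi'
    omega
  rw [hsplit, erase_insert (by simp), prod_union hdisj, prod_Ico_eq_prod_range, Nat.sub_sub]
  congr 1
  refine prod_congr rfl fun k _ => ?_
  have := pow_ne_zero b q_ne_zero
  rw [pow_add, pow_succ]
  field_simp

/-- partial fraction decomposition
`1/((z;q)_β) = Σ_{b=0}^{β-1} 1/((1-q^b z)·(q^{-b};q)_b·(q;q)_{β-b-1})`
as rational functions in `z` over `ℚ(q)`, for `β ≥ 1`. -/
theorem inv_poch_partial_fractions (β : ℕ) (hβ : 1 ≤ β) :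
    (poch z β)⁻¹ =
      ∑ b ∈ Finset.range β,
        ((1 - q ^ b * z) * poch ((q ^ b)⁻¹) b * poch q (β - b - 1))⁻¹ := by
  rw [poch, inv_prod_one_sub_mul_eq_sum (fun i _ => pow_ne_zero i q_ne_zero)
    q_pow_injective.injOn (nonempty_range_iff.mpr (by omega))
    (fun i _ => one_sub_q_pow_mul_z_ne_zero i)]
  refine sum_congr rfl fun b hb => ?_
  rw [prod_range_erase_one_sub_q_pow_mul_inv (mem_range.mp hb), mul_assoc]
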